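/- Let p be a rational prime and K a number field with ring of integers Z_K. For a positive integer f, let P_f be the number of distinct prime ideals of Z_K lying above p with residue degree f, and let N_f be the number of monic irreducible polynomials of degree f in 𝔽_p[x]. If P_f > N_f for some positive integer f, then for every θ ∈ Z_K that generates K over ℚ, the prime p divides the index (Z_K : ℤ[θ]). -/

import Mathlib

open Polynomial NumberField

/-!
If `p ∤ (Z_K : ℤ[θ])`, then `ℤ[θ] + I = Z_K` for every ideal `I ∋ p`, since both the index and
`p` kill `Z_K / (ℤ[θ] + I)` and they are coprime. So `θ` generates every residue ring `Z_K / I`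
over `𝔽_p`. For a prime `𝔭 ∋ p` of residue degree `f`, the minimal polynomial `g` of `θ mod 𝔭` is
then monic irreducible of degree `f`, and it determines `𝔭`: for any lift `G` of `g`,
`Z_K / (p, G(θ))` is a nonzero quotient of the field `𝔽_p[x] / (g)`, so `𝔭 = (p, G(θ))`.
Hence `𝔭 ↦ g` is injective and `P_f ≤ N_f`.
-/

theorem AddSubgroup.sup_eq_top_of_coprime_index {G : Type*} [AddCommGroup G]
    {A B : AddSubgroup G} {n : ℕ} (hn : n.Coprime A.index) (hB : ∀ x, n • x ∈ B) :
    A ⊔ B = ⊤ := by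
  refine eq_top_iff.2 fun x _ => ?_
  have hbezout := Nat.gcd_eq_gcd_ab n A.index
  rw [hn, Nat.cast_one] at hbezout
  have hx : x = n.gcdA A.index • (n • x) + n.gcdB A.index • (A.index • x) := by
    rw [← natCast_zsmul, ← natCast_zsmul, smul_smul, smul_smul, ← add_smul, mul_comm,
      mul_comm _ (A.index : ℤ), ← hbezout, one_smul]
  rw [hx]
  exact add_mem (mem_sup_right (zsmul_mem (hB x) _))
    (mem_sup_left (zsmul_mem (A.nsmul_index_mem x) _))

theorem RingHom.map_aeval_int_eq_aeval_map_zmod {R S : Type*} [CommRing R] [CommRing S] {p : ℕ}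
    [Algebra (ZMod p) S] (φ : R →+* S) (θ : R) (G : ℤ[X]) :
    φ (aeval θ G) = aeval (φ θ) (G.map (Int.castRingHom (ZMod p))) := by
  rw [← algebraMap_int_eq, aeval_map_algebraMap]
  exact (aeval_algHom_apply φ.toIntAlgHom θ G).symm

theorem Algebra.adjoin_zmod_map_eq_top_of_coprime_index {R S : Type*} [CommRing R] [CommRing S]
    {p : ℕ} [Algebra (ZMod p) S] {φ : R →+* S} (hφ : Function.Surjective φ) {θ : R}
    (hθ : p.Coprime (Algebra.adjoin ℤ {θ}).toSubring.toAddSubgroup.index) :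
    Algebra.adjoin (ZMod p) {φ θ} = ⊤ := by
  have hp : (p : S) = 0 := by
    rw [← map_natCast (algebraMap (ZMod p) S), ZMod.natCast_self, map_zero]
  have hker : ∀ x, p • x ∈ (RingHom.ker φ).toAddSubgroup := fun x => by
    simp [RingHom.mem_ker, nsmul_eq_mul, hp]
  refine Algebra.eq_top_iff.2 fun y => ?_
  obtain ⟨x, rfl⟩ := hφ y
  obtain ⟨a, ha, k, hk, rfl⟩ := AddSubgroup.mem_sup.1
    ((AddSubgroup.sup_eq_top_of_coprime_index hθ hker).ge (AddSubgroup.mem_top x))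
  obtain ⟨F, rfl⟩ := (AlgHom.mem_range _).1
    ((Algebra.adjoin_singleton_eq_range_aeval ℤ θ).le ha)
  rw [map_add, (RingHom.mem_ker).1 hk, add_zero, φ.map_aeval_int_eq_aeval_map_zmod (p := p)]
  exact aeval_mem_adjoin_singleton _ _

theorem isField_of_adjoin_singleton_eq_top_of_irreducible {K A : Type*} [Field K] [CommRing A]
    [Nontrivial A] [Algebra K A] {x : A} (hx : Algebra.adjoin K {x} = ⊤) {g : K[X]}
    (hg : Irreducible g) (hgx : aeval x g = 0) : IsField A := by
  have hsurj : Function.Surjective (aeval x : K[X] →ₐ[K] A) := by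
    rw [← AlgHom.range_eq_top, ← Algebra.adjoin_singleton_eq_range_aeval, hx]
  have hg_max : (Ideal.span {g}).IsMaximal := PrincipalIdealRing.isMaximal_of_irreducible hg
  have hker : RingHom.ker (aeval x : K[X] →ₐ[K] A) = Ideal.span {g} :=
    (hg_max.eq_of_le (RingHom.ker_ne_top _)
      (Ideal.span_le.2 (Set.singleton_subset_iff.2 hgx))).symm
  rw [← hker, Ideal.Quotient.maximal_ideal_iff_isField_quotient] at hg_max
  exact MulEquiv.isField hg_max (RingHom.quotientKerEquivOfSurjective hsurj).symm.toMulEquiv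

theorem Polynomial.finite_setOf_natDegree_le {R : Type*} [Semiring R] [Finite R] (n : ℕ) :
    {g : R[X] | g.natDegree ≤ n}.Finite := by
  have : Finite (degreeLT R (n + 1)) := .of_equiv _ (degreeLTEquiv R (n + 1)).toEquiv.symm
  refine (Set.finite_range (Subtype.val : degreeLT R (n + 1) → R[X])).subset fun g hg => ?_
  have hdeg : g.degree < ↑(n + 1) :=
    (degree_le_of_natDegree_le hg).trans_lt (by exact_mod_cast n.lt_succ_self)
  exact ⟨⟨g, mem_degreeLT.2 hdeg⟩, rfl⟩

theorem exists_monic_irreducible_aeval_mem_of_card_quotient {R : Type*} [CommRing R] {p f : ℕ}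
    (hp : p.Prime) {P : Ideal R} [P.IsPrime] (hcard : Nat.card (R ⧸ P) = p ^ f) {θ : R}
    (hθ : p.Coprime (Algebra.adjoin ℤ {θ}).toSubring.toAddSubgroup.index) :
    ∃ g : (ZMod p)[X], (g.Monic ∧ Irreducible g ∧ g.natDegree = f) ∧
      ∀ G : ℤ[X], G.map (Int.castRingHom (ZMod p)) = g → aeval θ G ∈ P := by
  have : Fact p.Prime := ⟨hp⟩
  have : Finite (R ⧸ P) := Nat.finite_of_card_ne_zero (hcard ▸ pow_ne_zero _ hp.ne_zero)
  have : Fintype (R ⧸ P) := .ofFinite _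
  let := (Finite.isField_of_domain (R ⧸ P)).toField
  have : CharP (R ⧸ P) p := charP_of_card_eq_prime_pow (R := R ⧸ P)
    (by rw [← Nat.card_eq_fintype_card, hcard])
  let := ZMod.algebra (R ⧸ P) p
  set x := Ideal.Quotient.mk P θ
  have hx : Algebra.adjoin (ZMod p) {x} = ⊤ :=
    Algebra.adjoin_zmod_map_eq_top_of_coprime_index Ideal.Quotient.mk_surjective hθ
  have hfinrank : Module.finrank (ZMod p) (R ⧸ P) = f := by
    refine Nat.pow_right_injective hp.two_le ?_
    dsimp only
    rw [← hcard, Nat.card_eq_fintype_card, Module.card_eq_pow_finrank (K := ZMod p), ZMod.card]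
  have hint : IsIntegral (ZMod p) x := .of_finite _ _
  refine ⟨minpoly (ZMod p) x, ⟨minpoly.monic hint, minpoly.irreducible hint, ?_⟩, fun G hG => ?_⟩
  · rw [← hfinrank, ← Field.primitive_element_iff_minpoly_natDegree_eq,
      IntermediateField.adjoin_simple_eq_top_iff_of_isAlgebraic hint.isAlgebraic, hx]
  · rw [← Ideal.Quotient.eq_zero_iff_mem, RingHom.map_aeval_int_eq_aeval_map_zmod (p := p), hG]
    exact minpoly.aeval _ _

theorem Ideal.eq_span_natCast_aeval_of_irreducible {R : Type*} [CommRing R] {p : ℕ}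
    (hp : p.Prime) {θ : R} (hθ : p.Coprime (Algebra.adjoin ℤ {θ}).toSubring.toAddSubgroup.index)
    {G : ℤ[X]} (hG : Irreducible (G.map (Int.castRingHom (ZMod p)))) {I : Ideal R} (hI : I ≠ ⊤)
    (hpI : (p : R) ∈ I) (hGI : aeval θ G ∈ I) :
    I = Ideal.span {(p : R), aeval θ G} := by
  have : Fact p.Prime := ⟨hp⟩
  set J := Ideal.span {(p : R), aeval θ G}
  have hJI : J ≤ I := Ideal.span_le.2 (Set.insert_subset hpI (Set.singleton_subset_iff.2 hGI))
  have : Nontrivial (R ⧸ J) := Ideal.Quotient.nontrivial_iff.2 (ne_top_of_le_ne_top hI hJI)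
  have : CharP (R ⧸ J) p := (CharP.charP_iff_prime_eq_zero hp).2 <| by
    rw [← map_natCast (Ideal.Quotient.mk J), Ideal.Quotient.eq_zero_iff_mem]
    exact Ideal.subset_span (Set.mem_insert _ _)
  let := ZMod.algebra (R ⧸ J) p
  have hJ : J.IsMaximal := by
    refine Ideal.Quotient.maximal_of_isField _
      (isField_of_adjoin_singleton_eq_top_of_irreducible (K := ZMod p)
        (Algebra.adjoin_zmod_map_eq_top_of_coprime_index Ideal.Quotient.mk_surjective hθ) hG ?_)
    rw [← RingHom.map_aeval_int_eq_aeval_map_zmod, Ideal.Quotient.eq_zero_iff_mem]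
    exact Ideal.subset_span (Set.mem_insert_of_mem _ rfl)
  exact (hJ.eq_of_le hI hJI).symm

theorem common_index_divisor_of_many_primes_general (p : ℕ) (hp : p.Prime)
    (K : Type*) [Field K] [NumberField K] (f : ℕ)
    (hgt : Nat.card {P : Ideal (𝓞 K) // P.IsPrime ∧ (p : 𝓞 K) ∈ P ∧
        Ideal.absNorm P = p ^ f}
      > Nat.card {g : (ZMod p)[X] // g.Monic ∧ Irreducible g ∧ g.natDegree = f}) :
    ∀ θ : 𝓞 K, IntermediateField.adjoin ℚ {(θ : K)} = ⊤ →
      p ∣ ((Algebra.adjoin ℤ {θ}).toSubring.toAddSubgroup.index) := by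
  intro θ _
  have : Fact p.Prime := ⟨hp⟩
  by_contra hdvd
  have hθ := (Nat.Prime.coprime_iff_not_dvd hp).2 hdvd
  have key (P : {P : Ideal (𝓞 K) // P.IsPrime ∧ (p : 𝓞 K) ∈ P ∧ Ideal.absNorm P = p ^ f}) :=
    have := P.2.1
    exists_monic_irreducible_aeval_mem_of_card_quotient hp
      (by rw [← Submodule.cardQuot_apply, ← Ideal.absNorm_apply, P.2.2.2]) hθ
  choose Φ hΦ hΦmem using key
  have hinj : Function.Injective fun P => (⟨Φ P, hΦ P⟩ :
      {g : (ZMod p)[X] // g.Monic ∧ Irreducible g ∧ g.natDegree = f}) := by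
    intro P Q hPQ
    obtain ⟨G, hG⟩ := map_surjective (Int.castRingHom (ZMod p)) ZMod.intCast_surjective (Φ P)
    have hirr : Irreducible (G.map (Int.castRingHom (ZMod p))) := hG ▸ (hΦ P).2.1
    refine Subtype.ext ?_
    rw [Ideal.eq_span_natCast_aeval_of_irreducible hp hθ hirr P.2.1.ne_top P.2.2.1
        (hΦmem P G hG),
      Ideal.eq_span_natCast_aeval_of_irreducible hp hθ hirr Q.2.1.ne_top Q.2.2.1
        (hΦmem Q G (hG.trans (congrArg Subtype.val hPQ)))]
  have : Finite {g : (ZMod p)[X] // g.Monic ∧ Irreducible g ∧ g.natDegree = f} :=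
    ((finite_setOf_natDegree_le f).subset fun g hg => hg.2.2.le).to_subtype
  exact (Nat.card_le_card_of_injective _ hinj).not_gt hgt

/-- Let `p` be a rational prime and `K` a number field with ring of integers `Z_K`. For
a positive integer `f`, let `P_f` be the number of prime ideals of `Z_K` lying above `p`
with residue degree `f` (equivalently, with absolute norm `p ^ f`), and `N_f` the number
of monic irreducible polynomials of degree `f` in `𝔽_p[x]`. If `P_f > N_f` for some
positive `f`, then for every `θ ∈ Z_K` generating `K` over `ℚ`, the prime `p` divides
the index `(Z_K : ℤ[θ])`. -/
theorem common_index_divisor_of_many_primes (p : ℕ) (hp : p.Prime)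
    (K : Type*) [Field K] [NumberField K] (f : ℕ) (hf : 0 < f)
    (hgt : Nat.card {P : Ideal (𝓞 K) // P.IsPrime ∧ (p : 𝓞 K) ∈ P ∧
        Ideal.absNorm P = p ^ f}
      > Nat.card {g : (ZMod p)[X] // g.Monic ∧ Irreducible g ∧ g.natDegree = f}) :
    ∀ θ : 𝓞 K, IntermediateField.adjoin ℚ {(θ : K)} = ⊤ →
      p ∣ ((Algebra.adjoin ℤ {θ}).toSubring.toAddSubgroup.index) :=
  common_index_divisor_of_many_primes_general p hp K f hgt
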